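/- Let n = 2M, let A be an invertible real n×n matrix, λ ∈ ℝᴹ, and L = A⁻¹(⊕ᵢ λᵢ J)A. Let x ∈ ℝⁿ, v = Ax with blocks v₁, …, v_M ∈ ℝ², assume v₁ ≠ 0, and let t₀ ∈ ℝ satisfy R(t₀λ₁)e₁ = v₁/‖v₁‖₂. Then exp(−t₀L)·x = A⁻¹(‖v₁‖₂ e₁ ⊕ R(−t₀λ₂)v₂ ⊕ ⋯ ⊕ R(−t₀λ_M)v_M); in particular A⁻¹·invRep_e(x; t₀) lies on the orbit {exp(tL)x : t ∈ ℝ} of x. -/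

import Mathlib

/-!
`J` is the matrix of multiplication by `i` on `ℂ ≅ ℝ²`, so `exp(sJ)` is the matrix of `e^{is}`,
namely `R(s)`. Hence `exp(-t₀L) = A⁻¹ (⊕ᵢ R(-t₀λᵢ)) A` rotates the `i`-th block of `v = Ax` by
`-t₀λᵢ`; since `R(t₀λ₁)` maps `e₁` onto the direction of `v₁`, the first block becomes `‖v₁‖₂ e₁`.
-/

open Matrix NormedSpace

noncomputable section

/-- `R(t)`: the 2×2 rotation matrix. -/
def R2 (t : ℝ) : Matrix (Fin 2) (Fin 2) ℝ :=
  !![Real.cos t, -Real.sin t; Real.sin t, Real.cos t]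

/-- `H(t)`: the 2×2 hyperbolic rotation with rows (cosh t, sinh t), (sinh t, cosh t). -/
def Hyp (t : ℝ) : Matrix (Fin 2) (Fin 2) ℝ :=
  !![Real.cosh t, Real.sinh t; Real.sinh t, Real.cosh t]

/-- `G(t)`: the 2×2 shear with rows (1, t), (0, 1). -/
def Gm (t : ℝ) : Matrix (Fin 2) (Fin 2) ℝ := !![1, t; 0, 1]

/-- `J`: rows (0, -1), (1, 0). -/
def Jmat : Matrix (Fin 2) (Fin 2) ℝ := !![0, -1; 1, 0]

/-- `K`: rows (0, 1), (1, 0). -/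
def Kmat : Matrix (Fin 2) (Fin 2) ℝ := !![0, 1; 1, 0]

/-- `N`: rows (0, 1), (0, 0). -/
def Nmat : Matrix (Fin 2) (Fin 2) ℝ := !![0, 1; 0, 0]

/-- Index type for `ℝⁿ` with `n = 2M`: component `2(i-1)+p` of block `i` is indexed `(p, i)`. -/
abbrev Idx (M : ℕ) := Fin 2 × Fin M

/-- The block-diagonal matrix `⊕ᵢ Cᵢ`. -/
def bdiag {M : ℕ} (C : Fin M → Matrix (Fin 2) (Fin 2) ℝ) : Matrix (Idx M) (Idx M) ℝ :=
  Matrix.blockDiagonal C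

/-- The `i`-th 2-dimensional block `vᵢ` of a vector `v ∈ ℝⁿ`. -/
def blk {M : ℕ} (v : Idx M → ℝ) (i : Fin M) : Fin 2 → ℝ := fun p => v (p, i)

/-- Concatenation `u₁ ⊕ ⋯ ⊕ u_M` of 2-dimensional blocks. -/
def cat {M : ℕ} (u : Fin M → (Fin 2 → ℝ)) : Idx M → ℝ := fun pi => u pi.2 pi.1

/-- `e₁ = (1, 0) ∈ ℝ²`. -/
def e1 : Fin 2 → ℝ := ![1, 0]

/-- `e₂ = (0, 1) ∈ ℝ²`. -/
def e2 : Fin 2 → ℝ := ![0, 1]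

/-- The Euclidean norm `‖u‖₂` of `u ∈ ℝ²`. -/
def norm2 (u : Fin 2 → ℝ) : ℝ := Real.sqrt (u 0 ^ 2 + u 1 ^ 2)

/-- The inverse hyperbolic tangent. -/
def artanh (x : ℝ) : ℝ := Real.log ((1 + x) / (1 - x)) / 2

/-- `t₀` is valid for `x` (elliptic case): `R(t₀λ₁)e₁ = v₁/‖v₁‖₂` where `v = Ax`. -/
def validE {M : ℕ} [NeZero M] (A : Matrix (Idx M) (Idx M) ℝ) (lam : Fin M → ℝ)
    (x : Idx M → ℝ) (t₀ : ℝ) : Prop :=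
  (R2 (t₀ * lam 0)).mulVec e1 = (norm2 (blk (A.mulVec x) 0))⁻¹ • blk (A.mulVec x) 0

/-- `invRep_e(x; t₀) = ‖v₁‖₂ e₁ ⊕ R(−t₀λ₂)v₂ ⊕ ⋯ ⊕ R(−t₀λ_M)v_M`, where `v = Ax`. -/
def invRepE {M : ℕ} [NeZero M] (A : Matrix (Idx M) (Idx M) ℝ) (lam : Fin M → ℝ)
    (x : Idx M → ℝ) (t₀ : ℝ) : Idx M → ℝ :=
  cat (fun i =>
    if i = 0 then norm2 (blk (A.mulVec x) 0) • e1
    else (R2 (-(t₀ * lam i))).mulVec (blk (A.mulVec x) i))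

/-- The hyperbolic parameter `t₀ = artanh(v_{1,2}/v_{1,1})/λ₁`, where `v = Ax`. -/
def t0H {M : ℕ} [NeZero M] (A : Matrix (Idx M) (Idx M) ℝ) (lam : Fin M → ℝ)
    (x : Idx M → ℝ) : ℝ :=
  artanh (blk (A.mulVec x) 0 1 / blk (A.mulVec x) 0 0) / lam 0

/-- `invRep_h(x) = sgn(v_{1,1})√(v_{1,1}² − v_{1,2}²) e₁ ⊕ H(−t₀λ₂)v₂ ⊕ ⋯`, `v = Ax`. -/
def invRepH {M : ℕ} [NeZero M] (A : Matrix (Idx M) (Idx M) ℝ) (lam : Fin M → ℝ)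
    (x : Idx M → ℝ) : Idx M → ℝ :=
  cat (fun i =>
    if i = 0 then
      (Real.sign (blk (A.mulVec x) 0 0) *
        Real.sqrt (blk (A.mulVec x) 0 0 ^ 2 - blk (A.mulVec x) 0 1 ^ 2)) • e1
    else (Hyp (-(t0H A lam x * lam i))).mulVec (blk (A.mulVec x) i))

/-- The parabolic parameter `t₀ = v_{1,1}/(λ₁ v_{1,2})`, where `v = Ax`. -/
def t0P {M : ℕ} [NeZero M] (A : Matrix (Idx M) (Idx M) ℝ) (lam : Fin M → ℝ)
    (x : Idx M → ℝ) : ℝ :=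
  blk (A.mulVec x) 0 0 / (lam 0 * blk (A.mulVec x) 0 1)

/-- `invRep_p(x) = v_{1,2} e₂ ⊕ G(−t₀λ₂)v₂ ⊕ ⋯ ⊕ G(−t₀λ_M)v_M`, where `v = Ax`. -/
def invRepP {M : ℕ} [NeZero M] (A : Matrix (Idx M) (Idx M) ℝ) (lam : Fin M → ℝ)
    (x : Idx M → ℝ) : Idx M → ℝ :=
  cat (fun i =>
    if i = 0 then blk (A.mulVec x) 0 1 • e2
    else (Gm (-(t0P A lam x * lam i))).mulVec (blk (A.mulVec x) i))

open Complex in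
lemma leftMulMatrix_basisOneI_ofReal_mul_I (s : ℝ) :
    Algebra.leftMulMatrix basisOneI ((s : ℂ) * I) = s • Jmat := by
  rw [Algebra.leftMulMatrix_complex, Jmat]
  ext i j
  fin_cases i <;> fin_cases j <;> simp

open Complex in
lemma leftMulMatrix_basisOneI_exp_ofReal_mul_I (s : ℝ) :
    Algebra.leftMulMatrix basisOneI (Complex.exp (s * I)) = R2 s := by
  rw [Algebra.leftMulMatrix_complex, R2, Complex.exp_mul_I]
  ext i j
  fin_cases i <;> fin_cases j <;> simp [← ofReal_cos, ← ofReal_sin]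

theorem exp_smul_Jmat (s : ℝ) : exp (s • Jmat) = R2 s := by
  -- `map_exp` needs a norm on matrices; any norm will do, since `exp` only sees the topology.
  let : NormedRing (Matrix (Fin 2) (Fin 2) ℝ) := Matrix.linftyOpNormedRing
  have hcont : Continuous (Algebra.leftMulMatrix Complex.basisOneI) :=
    (Algebra.leftMulMatrix Complex.basisOneI).toLinearMap.continuous_of_finiteDimensional
  rw [← leftMulMatrix_basisOneI_ofReal_mul_I, ← leftMulMatrix_basisOneI_exp_ofReal_mul_I,
    Complex.exp_eq_exp_ℂ]
  exact (map_exp _ hcont _).symm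

lemma R2_neg_mul_R2 (s : ℝ) : R2 (-s) * R2 s = 1 := by
  rw [← leftMulMatrix_basisOneI_exp_ofReal_mul_I, ← leftMulMatrix_basisOneI_exp_ofReal_mul_I,
    ← map_mul, ← Complex.exp_add, Complex.ofReal_neg, ← add_mul, neg_add_cancel, zero_mul,
    Complex.exp_zero, map_one]

lemma R2_neg_mulVec_eq_norm2_smul_e1 {u : Fin 2 → ℝ} (hu : u ≠ 0) {θ : ℝ}
    (hθ : R2 θ *ᵥ e1 = (norm2 u)⁻¹ • u) : R2 (-θ) *ᵥ u = norm2 u • e1 := by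
  have hnorm : norm2 u ≠ 0 := by
    contrapose! hu
    have hsq : u 0 ^ 2 + u 1 ^ 2 = 0 := (Real.sqrt_eq_zero (by positivity)).mp hu
    ext p
    fin_cases p <;> simp <;> nlinarith [sq_nonneg (u 0), sq_nonneg (u 1)]
  have hu' : u = norm2 u • R2 θ *ᵥ e1 := by rw [hθ, smul_inv_smul₀ hnorm]
  nth_rw 1 [hu']
  rw [mulVec_smul, mulVec_mulVec, R2_neg_mul_R2, one_mulVec]

section Blocks

variable {M : ℕ}

lemma bdiag_mulVec (C : Fin M → Matrix (Fin 2) (Fin 2) ℝ) (v : Idx M → ℝ) :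
    bdiag C *ᵥ v = cat fun i => C i *ᵥ blk v i := by
  ext ⟨p, i⟩
  simp only [bdiag, cat, blk, mulVec, dotProduct, blockDiagonal_apply, Fintype.sum_prod_type]
  rw [Finset.sum_comm]
  simp [ite_mul]

lemma smul_bdiag (c : ℝ) (C : Fin M → Matrix (Fin 2) (Fin 2) ℝ) :
    c • bdiag C = bdiag fun i => c • C i :=
  (blockDiagonal_smul c C).symm

lemma exp_bdiag (C : Fin M → Matrix (Fin 2) (Fin 2) ℝ) :
    exp (bdiag C) = bdiag fun i => exp (C i) := by
  let : NormedRing (Matrix (Fin 2) (Fin 2) ℝ) := Matrix.linftyOpNormedRing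
  let : NormedAlgebra ℝ (Matrix (Fin 2) (Fin 2) ℝ) := Matrix.linftyOpNormedAlgebra
  let : NormedAlgebra ℚ (Matrix (Fin 2) (Fin 2) ℝ) := Matrix.linftyOpNormedAlgebra
  rw [bdiag, exp_blockDiagonal]
  exact congrArg blockDiagonal (Pi.exp_def C)

theorem exp_smul_conj_bdiag_smul_Jmat (A : Matrix (Idx M) (Idx M) ℝ) (hA : IsUnit A)
    (lam : Fin M → ℝ) (t : ℝ) :
    exp (t • (A⁻¹ * bdiag (fun i => lam i • Jmat) * A)) =
      A⁻¹ * bdiag (fun i => R2 (t * lam i)) * A := by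
  rw [← Matrix.smul_mul, ← Matrix.mul_smul, smul_bdiag]
  simp_rw [smul_smul]
  rw [exp_conj' A _ hA, exp_bdiag]
  simp_rw [exp_smul_Jmat]

end Blocks

lemma cat_R2_mulVec_blk_eq_invRepE {M : ℕ} [NeZero M] (A : Matrix (Idx M) (Idx M) ℝ)
    (lam : Fin M → ℝ) (x : Idx M → ℝ) (hv : blk (A *ᵥ x) 0 ≠ 0) (t₀ : ℝ)
    (ht₀ : validE A lam x t₀) :
    (cat fun i => R2 (-(t₀ * lam i)) *ᵥ blk (A *ᵥ x) i) = invRepE A lam x t₀ := by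
  unfold invRepE
  congr 1
  ext1 i
  split_ifs with hi
  · subst hi
    exact R2_neg_mulVec_eq_norm2_smul_e1 hv ht₀
  · rfl

/-- **Elliptic orbit representation.** -/
theorem stmt10 (M : ℕ) [NeZero M] (A : Matrix (Idx M) (Idx M) ℝ) (hA : IsUnit A)
    (lam : Fin M → ℝ) (L : Matrix (Idx M) (Idx M) ℝ)
    (hL : L = A⁻¹ * bdiag (fun i => lam i • Jmat) * A)
    (x : Idx M → ℝ) (hv : blk (A.mulVec x) 0 ≠ 0)
    (t₀ : ℝ) (ht₀ : validE A lam x t₀) :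
    (NormedSpace.exp ((-t₀) • L)).mulVec x = A⁻¹.mulVec (invRepE A lam x t₀) ∧
      A⁻¹.mulVec (invRepE A lam x t₀) ∈
        {y | ∃ t : ℝ, y = (NormedSpace.exp (t • L)).mulVec x} := by
  have hflow : exp ((-t₀) • L) *ᵥ x = A⁻¹ *ᵥ invRepE A lam x t₀ := by
    rw [hL, exp_smul_conj_bdiag_smul_Jmat A hA, ← mulVec_mulVec, ← mulVec_mulVec, bdiag_mulVec]
    simp_rw [neg_mul]
    rw [cat_R2_mulVec_blk_eq_invRepE A lam x hv t₀ ht₀]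
  exact ⟨hflow, -t₀, hflow.symm⟩
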